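/- Confluence up to isomorphism holds with a diamond-like bound for the local case: if H → H₁ and H → H₂ by single rule applications, then either H₁ is isomorphic to H₂, or there exists H₃ such that H₁ → H₃' and H₂ → H₃'' with H₃' = H₃'' = H₃ (a single further step from each side reaches a common hypergraph). -/

import Mathlib

/-- A hypergraph: finite node set, finite edge set, incidence relation. -/
structure HG where
  V : Finset ℕ
  E : Finset ℕ
  I : Finset (ℕ × ℕ)

/-- Nodes incident to edge `e`. -/
def HG.Ve (H : HG) (e : ℕ) : Finset ℕ := H.V.filter (fun v => (v, e) ∈ H.I)

/-- Edges incident to node `v`. -/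
def HG.Ev (H : HG) (v : ℕ) : Finset ℕ := H.E.filter (fun e => (v, e) ∈ H.I)

/-- Remove edge `e'` (and its incidences). -/
def HG.removeEdge (H : HG) (e' : ℕ) : HG :=
  ⟨H.V, H.E.erase e', H.I.filter (fun p => p.2 ≠ e')⟩

/-- Remove node `v` (and its incidences). -/
def HG.removeNode (H : HG) (v : ℕ) : HG :=
  ⟨H.V.erase v, H.E, H.I.filter (fun p => p.1 ≠ v)⟩

/-- Edge-domination step: remove a dominating edge `e'`. -/
def EdgeStep (H H' : HG) : Prop :=
  ∃ e e', e ∈ H.E ∧ e' ∈ H.E ∧ e ≠ e' ∧ H.Ve e ⊆ H.Ve e' ∧ H' = H.removeEdge e'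

/-- Node-domination step: remove a dominated node `v`. -/
def NodeStep (H H' : HG) : Prop :=
  ∃ v v', v ∈ H.V ∧ v' ∈ H.V ∧ v ≠ v' ∧ H.Ev v ⊆ H.Ev v' ∧ H' = H.removeNode v

/-- One application of either rewrite rule. -/
def Step (H H' : HG) : Prop := EdgeStep H H' ∨ NodeStep H H'

/-- Hypergraph isomorphism. -/
def Iso (H H' : HG) : Prop :=
  ∃ f : {x // x ∈ H'.V} ≃ {x // x ∈ H.V}, ∃ g : {x // x ∈ H'.E} ≃ {x // x ∈ H.E},
    ∀ (v : {x // x ∈ H'.V}) (e : {x // x ∈ H'.E}),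
      ((v : ℕ), (e : ℕ)) ∈ H'.I ↔ ((f v : ℕ), (g e : ℕ)) ∈ H.I

/-- One rewrite step between isomorphism classes, via representatives. -/
def StepIso (H K : HG) : Prop := ∃ H' K', Iso H H' ∧ Iso K K' ∧ Step H' K'

/-!
Steps of different kinds commute: deleting a node never breaks an edge domination
`V(e) ⊆ V(e')`, and deleting an edge never breaks a node domination `E(v) ⊆ E(v')`.
For two edge steps deleting `e₁' ⊇ e₁` and `e₂' ⊇ e₂`, the step at `e₂'` survives the deletion
of `e₁'`: either its witness `e₂` is still present, or `e₂ = e₁'` and then `e₁ ⊆ e₁' ⊆ e₂'`.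
This fails only if `e₁'` and `e₂'` witness each other, i.e. have the same nodes; then swapping
them is an isomorphism between the two results. Node steps are handled in the same way.
-/

open Equiv Finset

lemma swap_mem_erase_iff {α : Type*} [DecidableEq α] {s : Finset α} {a b x : α} (ha : a ∈ s)
    (hb : b ∈ s) : swap a b x ∈ s.erase a ↔ x ∈ s.erase b := by
  rcases eq_or_ne x a with rfl | hxa
  · simp [ha, hb, eq_comm]
  rcases eq_or_ne x b with rfl | hxb
  · simp
  · simp [swap_apply_of_ne_of_ne hxa hxb, hxa, hxb]

lemma exists_mem_erase_ne_of_trans {α : Type*} [DecidableEq α] {r : α → α → Prop}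
    [IsTrans α r] {s : Finset α} {x₁ y₁ x₂ y₂ : α} (hy₁ : y₁ ∈ s) (hy₂ : y₂ ∈ s)
    (hxy₁ : y₁ ≠ x₁) (hxy₂ : y₂ ≠ x₂) (hr₁ : r y₁ x₁) (hr₂ : r y₂ x₂)
    (hnot : ¬(y₁ = x₂ ∧ y₂ = x₁)) : ∃ y ∈ s.erase x₁, y ≠ x₂ ∧ r y x₂ := by
  by_cases hy₂x₁ : y₂ = x₁
  · subst hy₂x₁
    exact ⟨y₁, mem_erase.2 ⟨hxy₁, hy₁⟩, fun h => hnot ⟨h, rfl⟩, _root_.trans hr₁ hr₂⟩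
  · exact ⟨y₂, mem_erase.2 ⟨hy₂x₁, hy₂⟩, hxy₂, hr₂⟩

lemma Iso.refl (H : HG) : Iso H H := ⟨.refl _, .refl _, fun _ _ => .rfl⟩

lemma Iso.of_perm {H K : HG} (σ τ : Perm ℕ) (hV : ∀ x, x ∈ K.V ↔ σ x ∈ H.V)
    (hE : ∀ x, x ∈ K.E ↔ τ x ∈ H.E)
    (hI : ∀ v ∈ K.V, ∀ e ∈ K.E, (v, e) ∈ K.I ↔ (σ v, τ e) ∈ H.I) : Iso H K :=
  ⟨σ.subtypeEquiv hV, τ.subtypeEquiv hE, fun v e => hI v v.2 e e.2⟩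

namespace HG

variable {H : HG} {a b e v : ℕ}

@[simp]
lemma mem_Ve : v ∈ H.Ve e ↔ v ∈ H.V ∧ (v, e) ∈ H.I := mem_filter

@[simp]
lemma mem_Ev : e ∈ H.Ev v ↔ e ∈ H.E ∧ (v, e) ∈ H.I := mem_filter

lemma Ve_removeEdge_of_ne (h : e ≠ a) : (H.removeEdge a).Ve e = H.Ve e := by
  ext; simp [removeEdge, h]

lemma Ev_removeNode_of_ne (h : v ≠ a) : (H.removeNode a).Ev v = H.Ev v := by
  ext; simp [removeNode, h]

lemma Ev_removeEdge : (H.removeEdge a).Ev v = (H.Ev v).erase a := by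
  ext; simp [removeEdge]; tauto

lemma Ve_removeNode : (H.removeNode a).Ve e = (H.Ve e).erase a := by
  ext; simp [removeNode]; tauto

lemma removeEdge_comm (H : HG) (a b : ℕ) :
    (H.removeEdge a).removeEdge b = (H.removeEdge b).removeEdge a := by
  simp only [removeEdge, erase_right_comm, filter_filter, and_comm]

lemma removeNode_comm (H : HG) (a b : ℕ) :
    (H.removeNode a).removeNode b = (H.removeNode b).removeNode a := by
  simp only [removeNode, erase_right_comm, filter_filter, and_comm]

lemma removeEdge_removeNode_comm (H : HG) (e v : ℕ) :
    (H.removeEdge e).removeNode v = (H.removeNode v).removeEdge e := by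
  simp only [removeEdge, removeNode, filter_filter, and_comm]

lemma iso_removeEdge_of_Ve_eq (ha : a ∈ H.E) (hb : b ∈ H.E) (hab : H.Ve a = H.Ve b) :
    Iso (H.removeEdge a) (H.removeEdge b) := by
  refine .of_perm 1 (swap a b) (fun _ => .rfl) (fun _ => (swap_mem_erase_iff ha hb).symm)
    fun v hv e he => ?_
  have hI : (v, a) ∈ H.I ↔ (v, b) ∈ H.I := by
    simpa [show v ∈ H.V from hv] using congrArg (v ∈ ·) hab
  simp only [removeEdge, mem_filter, mem_erase] at he ⊢
  rcases eq_or_ne e a with rfl | hea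
  · simp [hI, he.1, he.1.symm]
  · simp [swap_apply_of_ne_of_ne hea he.1, hea, he.1]

lemma iso_removeNode_of_Ev_eq (ha : a ∈ H.V) (hb : b ∈ H.V) (hab : H.Ev a = H.Ev b) :
    Iso (H.removeNode a) (H.removeNode b) := by
  refine .of_perm (swap a b) 1 (fun _ => (swap_mem_erase_iff ha hb).symm) (fun _ => .rfl)
    fun v hv e he => ?_
  have hI : (a, e) ∈ H.I ↔ (b, e) ∈ H.I := by
    simpa [show e ∈ H.E from he] using congrArg (e ∈ ·) hab
  simp only [removeNode, mem_filter, mem_erase] at hv ⊢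
  rcases eq_or_ne v a with rfl | hva
  · simp [hI, hv.1, hv.1.symm]
  · simp [swap_apply_of_ne_of_ne hva hv.1, hva, hv.1]

lemma edgeStep_removeEdge {e e' : ℕ} (he : e ∈ H.E.erase a) (he' : e' ∈ H.E.erase a)
    (hne : e ≠ e') (hs : H.Ve e ⊆ H.Ve e') :
    EdgeStep (H.removeEdge a) ((H.removeEdge a).removeEdge e') := by
  refine ⟨e, e', he, he', hne, ?_, rfl⟩
  rwa [Ve_removeEdge_of_ne (ne_of_mem_erase he), Ve_removeEdge_of_ne (ne_of_mem_erase he')]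

lemma nodeStep_removeNode {v v' : ℕ} (hv : v ∈ H.V.erase a) (hv' : v' ∈ H.V.erase a)
    (hne : v ≠ v') (hs : H.Ev v ⊆ H.Ev v') :
    NodeStep (H.removeNode a) ((H.removeNode a).removeNode v) := by
  refine ⟨v, v', hv, hv', hne, ?_, rfl⟩
  rwa [Ev_removeNode_of_ne (ne_of_mem_erase hv), Ev_removeNode_of_ne (ne_of_mem_erase hv')]

end HG

open HG

lemma EdgeStep.removeNode {H K : HG} (h : EdgeStep H K) (v : ℕ) :
    EdgeStep (H.removeNode v) (K.removeNode v) := by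
  obtain ⟨e, e', he, he', hne, hs, rfl⟩ := h
  refine ⟨e, e', he, he', hne, ?_, removeEdge_removeNode_comm H e' v⟩
  simpa only [Ve_removeNode] using erase_subset_erase v hs

lemma NodeStep.removeEdge {H K : HG} (h : NodeStep H K) (e : ℕ) :
    NodeStep (H.removeEdge e) (K.removeEdge e) := by
  obtain ⟨v, v', hv, hv', hne, hs, rfl⟩ := h
  refine ⟨v, v', hv, hv', hne, ?_, (removeEdge_removeNode_comm H e v).symm⟩
  simpa only [Ev_removeEdge] using erase_subset_erase e hs

lemma edgeStep_local_confluence {H H₁ H₂ : HG} (h₁ : EdgeStep H H₁) (h₂ : EdgeStep H H₂) :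
    Iso H₁ H₂ ∨ ∃ H₃, EdgeStep H₁ H₃ ∧ EdgeStep H₂ H₃ := by
  obtain ⟨e₁, e₁', he₁, he₁', hne₁, hs₁, rfl⟩ := h₁
  obtain ⟨e₂, e₂', he₂, he₂', hne₂, hs₂, rfl⟩ := h₂
  rcases eq_or_ne e₁' e₂' with rfl | hne
  · exact .inl (.refl _)
  by_cases htwin : e₁ = e₂' ∧ e₂ = e₁'
  · obtain ⟨rfl, rfl⟩ := htwin
    exact .inl (iso_removeEdge_of_Ve_eq he₂ he₁ (hs₂.antisymm hs₁))
  let r a b := H.Ve a ⊆ H.Ve b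
  have : IsTrans ℕ r := ⟨fun _ _ _ => Subset.trans⟩
  obtain ⟨e, he, hee₂', hs⟩ :=
    exists_mem_erase_ne_of_trans (r := r) he₁ he₂ hne₁ hne₂ hs₁ hs₂ htwin
  obtain ⟨f, hf, hfe₁', hs'⟩ :=
    exists_mem_erase_ne_of_trans (r := r) he₂ he₁ hne₂ hne₁ hs₂ hs₁ (htwin ∘ And.symm)
  refine .inr ⟨_, edgeStep_removeEdge he (mem_erase.2 ⟨hne.symm, he₂'⟩) hee₂' hs, ?_⟩
  rw [removeEdge_comm]
  exact edgeStep_removeEdge hf (mem_erase.2 ⟨hne, he₁'⟩) hfe₁' hs'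

lemma nodeStep_local_confluence {H H₁ H₂ : HG} (h₁ : NodeStep H H₁) (h₂ : NodeStep H H₂) :
    Iso H₁ H₂ ∨ ∃ H₃, NodeStep H₁ H₃ ∧ NodeStep H₂ H₃ := by
  obtain ⟨v₁, v₁', hv₁, hv₁', hne₁, hs₁, rfl⟩ := h₁
  obtain ⟨v₂, v₂', hv₂, hv₂', hne₂, hs₂, rfl⟩ := h₂
  rcases eq_or_ne v₁ v₂ with rfl | hne
  · exact .inl (.refl _)
  by_cases htwin : v₁' = v₂ ∧ v₂' = v₁
  · obtain ⟨rfl, rfl⟩ := htwin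
    exact .inl (iso_removeNode_of_Ev_eq hv₂' hv₁' (hs₁.antisymm hs₂))
  let r a b := H.Ev b ⊆ H.Ev a
  have : IsTrans ℕ r := ⟨fun _ _ _ h h' => h'.trans h⟩
  obtain ⟨v, hv, hvv₂, hs⟩ :=
    exists_mem_erase_ne_of_trans (r := r) hv₁' hv₂' hne₁.symm hne₂.symm hs₁ hs₂ htwin
  obtain ⟨w, hw, hwv₁, hs'⟩ :=
    exists_mem_erase_ne_of_trans (r := r) hv₂' hv₁' hne₂.symm hne₁.symm hs₂ hs₁
      (htwin ∘ And.symm)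
  refine .inr ⟨_, nodeStep_removeNode (mem_erase.2 ⟨hne.symm, hv₂⟩) hv hvv₂.symm hs, ?_⟩
  rw [removeNode_comm]
  exact nodeStep_removeNode (mem_erase.2 ⟨hne, hv₁⟩) hw hwv₁.symm hs'

lemma edgeStep_nodeStep_commute {H H₁ H₂ : HG} (h₁ : EdgeStep H H₁) (h₂ : NodeStep H H₂) :
    ∃ H₃, NodeStep H₁ H₃ ∧ EdgeStep H₂ H₃ := by
  obtain ⟨-, e', -, -, -, -, rfl⟩ := id h₁
  obtain ⟨v, -, -, -, -, -, rfl⟩ := id h₂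
  exact ⟨_, h₂.removeEdge e', removeEdge_removeNode_comm H e' v ▸ h₁.removeNode v⟩

/-- Diamond-like local confluence: one step from each side reaches a common
hypergraph, unless the results are already isomorphic. -/
theorem local_confluence_diamond (H H₁ H₂ : HG)
    (h₁ : Step H H₁) (h₂ : Step H H₂) :
    Iso H₁ H₂ ∨ ∃ H₃ : HG, Step H₁ H₃ ∧ Step H₂ H₃ := by
  rcases h₁ with h₁ | h₁ <;> rcases h₂ with h₂ | h₂
  · exact (edgeStep_local_confluence h₁ h₂).imp_right
      fun ⟨H₃, h₁₃, h₂₃⟩ => ⟨H₃, .inl h₁₃, .inl h₂₃⟩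
  · obtain ⟨H₃, h₁₃, h₂₃⟩ := edgeStep_nodeStep_commute h₁ h₂
    exact .inr ⟨H₃, .inr h₁₃, .inl h₂₃⟩
  · obtain ⟨H₃, h₂₃, h₁₃⟩ := edgeStep_nodeStep_commute h₂ h₁
    exact .inr ⟨H₃, .inl h₁₃, .inr h₂₃⟩
  · exact (nodeStep_local_confluence h₁ h₂).imp_right
      fun ⟨H₃, h₁₃, h₂₃⟩ => ⟨H₃, .inr h₁₃, .inr h₂₃⟩
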